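/- arXiv:2602.17903 — 5 statements merged into one kernel-verified Lean document; each statement's English description precedes it below -/
import Mathlib

section
/- Let ℓ be a positive integer. Then the real number ((1 + α^{-ℓ})/√5) · ((1 + β^{-ℓ})/√5) equals: −L_ℓ/5 if ℓ is odd; F_{ℓ/2}² if ℓ ≡ 2 (mod 4); and L_{ℓ/2}²/5 if ℓ ≡ 0 (mod 4). -/
/-!
Since `φ⁻¹ = -ψ` and `ψ⁻¹ = -φ`, the product is `(1 + (-ψ)^ℓ)(1 + (-φ)^ℓ)/5 = (1 + (-1)^ℓ (L_ℓ + 1))/5`.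
For odd `ℓ` this is `-L_ℓ/5`. For `ℓ = 2m` it is `(2 + L_{2m})/5 = (L_m² + 2 - 2(-1)^m)/5`, which is
`L_m²/5` for even `m`, and `F_m²` for odd `m` by `L_m² - 5F_m² = 4(-1)^m`.
-/

/-- The Lucas numbers: `L 0 = 2`, `L 1 = 1`, `L (n+2) = L (n+1) + L n`. -/
def lucas : ℕ → ℕ
  | 0 => 2
  | 1 => 1
  | n + 2 => lucas (n + 1) + lucas n

open Real goldenRatio

theorem coe_lucas_eq (n : ℕ) : (lucas n : ℝ) = φ ^ n + ψ ^ n := by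
  induction n using Nat.twoStepInduction with
  | zero => norm_num [lucas]
  | one => simp [lucas, goldenRatio_add_goldenConj]
  | more n ih₀ ih₁ =>
    rw [lucas, Nat.cast_add, ih₀, ih₁]
    linear_combination (-φ ^ n) * goldenRatio_sq - ψ ^ n * goldenConj_sq

theorem goldenRatio_pow_mul_goldenConj_pow (n : ℕ) : φ ^ n * ψ ^ n = (-1) ^ n := by
  rw [← mul_pow, goldenRatio_mul_goldenConj]

theorem coe_lucas_sq_sub_five_mul_fib_sq (n : ℕ) :
    (lucas n : ℝ) ^ 2 - 5 * (Nat.fib n : ℝ) ^ 2 = 4 * (-1) ^ n := by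
  have h5 : √5 ^ 2 = 5 := sq_sqrt (by norm_num)
  rw [coe_lucas_eq, coe_fib_eq, div_pow _ √5, h5]
  linear_combination 4 * goldenRatio_pow_mul_goldenConj_pow n

theorem coe_lucas_two_mul (n : ℕ) : (lucas (2 * n) : ℝ) = (lucas n : ℝ) ^ 2 - 2 * (-1) ^ n := by
  rw [coe_lucas_eq, coe_lucas_eq, pow_mul', pow_mul']
  linear_combination -2 * goldenRatio_pow_mul_goldenConj_pow n

theorem one_add_goldenRatio_zpow_neg_mul_one_add_goldenConj_zpow_neg (n : ℕ) :
    (1 + φ ^ (-(n : ℤ))) * (1 + ψ ^ (-(n : ℤ))) = 1 + (-1) ^ n * (lucas n + 1) := by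
  have hprod : (-ψ) ^ n * (-φ) ^ n = (-1) ^ n := by
    rw [← mul_pow, neg_mul_neg, goldenConj_mul_goldenRatio]
  rw [zpow_neg, zpow_neg, zpow_natCast, zpow_natCast, ← inv_pow, ← inv_pow, inv_goldenRatio,
    inv_goldenConj, coe_lucas_eq]
  linear_combination neg_pow ψ n + neg_pow φ n + hprod

theorem stmt7_general (ℓ : ℕ) :
    (((1 + ((1 + Real.sqrt 5) / 2) ^ (-(ℓ : ℤ))) / Real.sqrt 5) *
      ((1 + ((1 - Real.sqrt 5) / 2) ^ (-(ℓ : ℤ))) / Real.sqrt 5)) =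
    if ℓ % 2 = 1 then -(lucas ℓ : ℝ) / 5
    else if ℓ % 4 = 2 then ((Nat.fib (ℓ / 2) : ℝ)) ^ 2
    else ((lucas (ℓ / 2) : ℝ)) ^ 2 / 5 := by
  change (1 + φ ^ (-(ℓ : ℤ))) / √5 * ((1 + ψ ^ (-(ℓ : ℤ))) / √5) = _
  rw [div_mul_div_comm, mul_self_sqrt (by norm_num),
    one_add_goldenRatio_zpow_neg_mul_one_add_goldenConj_zpow_neg]
  obtain ⟨m, rfl | rfl⟩ := Nat.even_or_odd' ℓ
  · rw [if_neg (by omega), Nat.mul_div_cancel_left m two_pos, pow_mul, neg_one_sq, one_pow,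
      coe_lucas_two_mul]
    rcases Nat.even_or_odd m with hm | hm
    · rw [if_neg (by rcases hm with ⟨k, rfl⟩; omega), hm.neg_one_pow]
      ring
    · rw [if_pos (by rcases hm with ⟨k, rfl⟩; omega), hm.neg_one_pow]
      have cassini := coe_lucas_sq_sub_five_mul_fib_sq m
      rw [hm.neg_one_pow] at cassini
      linear_combination cassini / 5
  · rw [if_pos (by omega), pow_succ, pow_mul, neg_one_sq, one_pow]
    ring

theorem stmt7 (ℓ : ℕ) (hℓ : 1 ≤ ℓ) :
    (((1 + ((1 + Real.sqrt 5) / 2) ^ (-(ℓ : ℤ))) / Real.sqrt 5) *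
      ((1 + ((1 - Real.sqrt 5) / 2) ^ (-(ℓ : ℤ))) / Real.sqrt 5)) =
    if ℓ % 2 = 1 then -(lucas ℓ : ℝ) / 5
    else if ℓ % 4 = 2 then ((Nat.fib (ℓ / 2) : ℝ)) ^ 2
    else ((lucas (ℓ / 2) : ℝ)) ^ 2 / 5 :=
  stmt7_general ℓ
end

section
/- Let p and q be prime numbers and let n, m, x, y be nonnegative integers with n ≥ m, n ≥ 1, and F_n + F_m = p^x q^y. Then |α^n / (√5 · p^x q^y) − 1| < 4 / α^{n−m}, where α = (1+√5)/2. -/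
/-!
With `ψ = (1 - √5) / 2` and Binet's formula `√5 F_k = φ^k - ψ^k`, the denominator
`D = √5 (F_n + F_m)` differs from `φ^n` by `ψ^n + ψ^m - φ^m`, which is at most `3 φ^m` in
absolute value since `|ψ| < 1`. On the other hand `D ≥ φ^n - ψ^n > 3 φ^n / 4` because
`4 ψ^n < φ^n` for `n ≥ 1`, so `|φ^n / D - 1| ≤ 3 φ^m / D < 4 φ^m / φ^n`.
-/

open scoped goldenRatio

namespace Real

lemma sqrt_five_mul_fib (k : ℕ) : √5 * Nat.fib k = φ ^ k - ψ ^ k := by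
  rw [coe_fib_eq, mul_div_cancel₀ _ (by positivity)]

lemma abs_goldenConj_pow_le_one (k : ℕ) : |ψ ^ k| ≤ 1 := by
  rw [abs_pow]
  exact pow_le_one₀ (abs_nonneg _)
    (abs_le.mpr ⟨neg_one_lt_goldenConj.le, goldenConj_neg.le.trans zero_le_one⟩)

lemma four_mul_goldenConj_pow_lt_goldenRatio_pow {n : ℕ} (hn : 1 ≤ n) :
    4 * ψ ^ n < φ ^ n := by
  obtain rfl | ⟨k, rfl⟩ : n = 1 ∨ ∃ k, n = k + 2 := by
    rcases Nat.exists_eq_add_of_le hn with ⟨_ | k, rfl⟩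
    · exact .inl rfl
    · exact .inr ⟨k, by omega⟩
  · linarith [goldenConj_neg, goldenRatio_pos, pow_one φ, pow_one ψ]
  · have hψ : ψ ^ (k + 2) ≤ ψ ^ 2 := by
      rw [pow_add]
      calc ψ ^ k * ψ ^ 2 ≤ |ψ ^ k| * ψ ^ 2 := by gcongr; exact le_abs_self _
        _ ≤ ψ ^ 2 := mul_le_of_le_one_left (sq_nonneg ψ) (abs_goldenConj_pow_le_one k)
    have hφ : φ ^ 2 ≤ φ ^ (k + 2) := pow_le_pow_right₀ one_lt_goldenRatio.le (by omega)
    have h9 : (9 / 5 : ℝ) < √5 := by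
      rw [lt_sqrt (by norm_num)]
      norm_num
    have h4 : 4 * ψ ^ 2 < φ ^ 2 := by
      rw [goldenConj_sq, goldenRatio_sq, goldenConj, goldenRatio]
      linarith
    linarith

lemma abs_goldenRatio_pow_sub_sqrt_five_mul_fib_add_fib_le (n m : ℕ) :
    |φ ^ n - √5 * (Nat.fib n + Nat.fib m)| ≤ 3 * φ ^ m := by
  have hφ : 1 ≤ φ ^ m := one_le_pow₀ one_lt_goldenRatio.le
  have hn := abs_le.mp (abs_goldenConj_pow_le_one n)
  have hm := abs_le.mp (abs_goldenConj_pow_le_one m)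
  rw [mul_add, sqrt_five_mul_fib, sqrt_five_mul_fib, abs_le]
  constructor <;> linarith

lemma three_mul_goldenRatio_pow_lt {n : ℕ} (hn : 1 ≤ n) (m : ℕ) :
    3 * φ ^ n < 4 * (√5 * (Nat.fib n + Nat.fib m)) := by
  have hm : 0 ≤ √5 * Nat.fib m := by positivity
  have := four_mul_goldenConj_pow_lt_goldenRatio_pow hn
  rw [mul_add, sqrt_five_mul_fib]
  linarith

theorem abs_goldenRatio_pow_div_sqrt_five_mul_fib_add_fib_sub_one_lt {n m : ℕ} (hmn : m ≤ n)
    (hn : 1 ≤ n) : |φ ^ n / (√5 * (Nat.fib n + Nat.fib m)) - 1| < 4 / φ ^ (n - m) := by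
  set D := √5 * (Nat.fib n + Nat.fib m)
  have hD : 0 < D := by
    have := three_mul_goldenRatio_pow_lt hn m
    linarith [pow_pos goldenRatio_pos n]
  have hφ : 0 < φ ^ (n - m) := pow_pos goldenRatio_pos _
  rw [div_sub_one hD.ne', abs_div, abs_of_pos hD, div_lt_div_iff₀ hD hφ]
  calc |φ ^ n - D| * φ ^ (n - m) ≤ 3 * φ ^ m * φ ^ (n - m) := by
        gcongr; exact abs_goldenRatio_pow_sub_sqrt_five_mul_fib_add_fib_le n m
    _ = 3 * φ ^ n := by rw [mul_assoc, ← pow_add, Nat.add_sub_cancel' hmn]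
    _ < 4 * D := three_mul_goldenRatio_pow_lt hn m

end Real

theorem stmt14_general (p q : ℕ)
    (n m x y : ℕ) (hnm : m ≤ n) (hn : 1 ≤ n)
    (he : Nat.fib n + Nat.fib m = p ^ x * q ^ y) :
    |((1 + Real.sqrt 5) / 2) ^ n / (Real.sqrt 5 * ((p : ℝ) ^ x * (q : ℝ) ^ y)) - 1| <
      4 / ((1 + Real.sqrt 5) / 2) ^ (n - m) := by
  have heR : ((p : ℝ) ^ x * (q : ℝ) ^ y) = Nat.fib n + Nat.fib m := by exact_mod_cast he.symm
  rw [heR]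
  exact Real.abs_goldenRatio_pow_div_sqrt_five_mul_fib_add_fib_sub_one_lt hnm hn

theorem stmt14 (p q : ℕ) (hp : p.Prime) (hq : q.Prime)
    (n m x y : ℕ) (hnm : m ≤ n) (hn : 1 ≤ n)
    (he : Nat.fib n + Nat.fib m = p ^ x * q ^ y) :
    |((1 + Real.sqrt 5) / 2) ^ n / (Real.sqrt 5 * ((p : ℝ) ^ x * (q : ℝ) ^ y)) - 1| <
      4 / ((1 + Real.sqrt 5) / 2) ^ (n - m) :=
  stmt14_general p q n m x y hnm hn he
end

section
/- Let p and q be prime numbers and let n, m, x, y be nonnegative integers with n ≥ m, n ≥ 1, and F_n + F_m = p^x q^y. Then |α^n · (1 + α^{−(n−m)}) / (√5 · p^x q^y) − 1| < 2 / α^n, where α = (1+√5)/2. -/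
/-!
By Binet's formula `√5 (F_n + F_m) = φ^n + φ^m - (ψ^n + ψ^m)`, and the left factor of the
quotient is `φ^n + φ^m`, so the quantity inside the absolute value is
`(ψ^n + ψ^m) / (√5 (F_n + F_m))`. Since `|ψ| = φ⁻¹ < 1`, its numerator times `φ^n` is at most
`1 + φ^n`, and `φ^n ≤ F_{n+2} ≤ 3 F_n` makes this smaller than `2 √5 F_n`.
-/

open Real goldenRatio

namespace Real

theorem goldenRatio_pow_le_fib_add_two (n : ℕ) : φ ^ n ≤ Nat.fib (n + 2) := by
  have hψ : -ψ ≤ 1 := by linarith [neg_one_lt_goldenConj]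
  have hfib : (0 : ℝ) ≤ Nat.fib n := Nat.cast_nonneg _
  rw [← fib_succ_sub_goldenConj_mul_fib, Nat.fib_add_two, Nat.cast_add]
  nlinarith

theorem fib_add_two_le_three_mul_fib {n : ℕ} (hn : n ≠ 0) : Nat.fib (n + 2) ≤ 3 * Nat.fib n := by
  obtain ⟨k, rfl⟩ := Nat.exists_eq_add_one_of_ne_zero hn
  have hmono : Nat.fib k ≤ Nat.fib (k + 1) := Nat.fib_le_fib_succ
  rw [Nat.fib_add_two, Nat.fib_add_two]
  omega

theorem one_add_goldenRatio_pow_lt_two_mul_sqrt_five_mul_fib {n : ℕ} (hn : n ≠ 0) :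
    1 + φ ^ n < 2 * √5 * Nat.fib n := by
  have hfib : (1 : ℝ) ≤ Nat.fib n := by exact_mod_cast Nat.fib_pos.mpr (Nat.pos_of_ne_zero hn)
  have hsqrt : (2 : ℝ) < √5 := by
    rw [show (2 : ℝ) = √(2 ^ 2) by simp]
    exact Real.sqrt_lt_sqrt (by norm_num) (by norm_num)
  have hpow : φ ^ n ≤ 3 * Nat.fib n := by
    calc φ ^ n ≤ Nat.fib (n + 2) := goldenRatio_pow_le_fib_add_two n
      _ ≤ 3 * Nat.fib n := by exact_mod_cast fib_add_two_le_three_mul_fib hn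
  nlinarith

theorem abs_goldenConj_pow_add_mul_goldenRatio_pow_le (n m : ℕ) :
    |ψ ^ n + ψ ^ m| * φ ^ n ≤ 1 + φ ^ n := by
  have habs : |ψ| < 1 := abs_lt.mpr ⟨neg_one_lt_goldenConj, by linarith [goldenConj_neg]⟩
  have hcancel : |ψ| ^ n * φ ^ n = 1 := by
    rw [← abs_of_pos goldenRatio_pos, ← mul_pow, ← abs_mul, goldenConj_mul_goldenRatio]
    simp
  have hm : |ψ| ^ m ≤ 1 := pow_le_one₀ (abs_nonneg _) habs.le
  calc |ψ ^ n + ψ ^ m| * φ ^ n ≤ (|ψ| ^ n + |ψ| ^ m) * φ ^ n := by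
        gcongr
        simpa only [abs_pow] using abs_add_le (ψ ^ n) (ψ ^ m)
    _ ≤ (|ψ| ^ n + 1) * φ ^ n := by gcongr
    _ = 1 + φ ^ n := by rw [add_mul, hcancel, one_mul]

theorem sqrt_five_mul_fib_add_fib (n m : ℕ) :
    √5 * (Nat.fib n + Nat.fib m) = φ ^ n + φ ^ m - (ψ ^ n + ψ ^ m) := by
  have h5 : √5 ≠ 0 := by positivity
  rw [coe_fib_eq, coe_fib_eq]
  field_simp
  ring

theorem abs_goldenRatio_pow_add_div_sub_one_lt {n : ℕ} (hn : n ≠ 0) (m : ℕ) :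
    |(φ ^ n + φ ^ m) / (√5 * (Nat.fib n + Nat.fib m)) - 1| < 2 / φ ^ n := by
  have hfib : (0 : ℝ) < Nat.fib n := by exact_mod_cast Nat.fib_pos.mpr (Nat.pos_of_ne_zero hn)
  have hden : 0 < √5 * (Nat.fib n + Nat.fib m) := by positivity
  have hsub : (φ ^ n + φ ^ m) / (√5 * (Nat.fib n + Nat.fib m)) - 1
      = (ψ ^ n + ψ ^ m) / (√5 * (Nat.fib n + Nat.fib m)) := by
    rw [div_sub_one hden.ne', sqrt_five_mul_fib_add_fib]
    ring_nf
  rw [hsub, abs_div, abs_of_pos hden, div_lt_div_iff₀ hden (pow_pos goldenRatio_pos n)]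
  calc |ψ ^ n + ψ ^ m| * φ ^ n ≤ 1 + φ ^ n := abs_goldenConj_pow_add_mul_goldenRatio_pow_le n m
    _ < 2 * √5 * Nat.fib n := one_add_goldenRatio_pow_lt_two_mul_sqrt_five_mul_fib hn
    _ ≤ 2 * (√5 * (Nat.fib n + Nat.fib m)) := by
        have : (0 : ℝ) ≤ Nat.fib m := Nat.cast_nonneg _
        nlinarith [Real.sqrt_nonneg 5]

theorem goldenRatio_pow_mul_one_add_zpow_neg_sub {n m : ℕ} (hmn : m ≤ n) :
    φ ^ n * (1 + φ ^ (-((n - m : ℕ) : ℤ))) = φ ^ n + φ ^ m := by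
  obtain ⟨k, rfl⟩ := Nat.exists_eq_add_of_le hmn
  rw [Nat.add_sub_cancel_left, zpow_neg, zpow_natCast, pow_add]
  field_simp

end Real

theorem stmt15_general (p q : ℕ)
    (n m x y : ℕ) (hnm : m ≤ n) (hn : 1 ≤ n)
    (he : Nat.fib n + Nat.fib m = p ^ x * q ^ y) :
    |((1 + Real.sqrt 5) / 2) ^ n * (1 + ((1 + Real.sqrt 5) / 2) ^ (-((n - m : ℕ) : ℤ))) /
        (Real.sqrt 5 * ((p : ℝ) ^ x * (q : ℝ) ^ y)) - 1| <
      2 / ((1 + Real.sqrt 5) / 2) ^ n := by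
  have hcast : (p : ℝ) ^ x * (q : ℝ) ^ y = Nat.fib n + Nat.fib m := by exact_mod_cast he.symm
  rw [goldenRatio_pow_mul_one_add_zpow_neg_sub hnm, hcast]
  exact abs_goldenRatio_pow_add_div_sub_one_lt (Nat.one_le_iff_ne_zero.mp hn) m

theorem stmt15 (p q : ℕ) (hp : p.Prime) (hq : q.Prime)
    (n m x y : ℕ) (hnm : m ≤ n) (hn : 1 ≤ n)
    (he : Nat.fib n + Nat.fib m = p ^ x * q ^ y) :
    |((1 + Real.sqrt 5) / 2) ^ n * (1 + ((1 + Real.sqrt 5) / 2) ^ (-((n - m : ℕ) : ℤ))) /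
        (Real.sqrt 5 * ((p : ℝ) ^ x * (q : ℝ) ^ y)) - 1| <
      2 / ((1 + Real.sqrt 5) / 2) ^ n :=
  stmt15_general p q n m x y hnm hn he
end

section
/- Let a ≥ 1 be an odd integer such that the Fibonacci number F_a is odd (equivalently, 3 does not divide a). Then gcd(F_a, L_b) = 1 for every integer b ≥ 1. -/
open Nat (fib)

theorem lucas_add_fib (n : ℕ) : lucas n + fib n = 2 * fib (n + 1) := by
  induction n using Nat.twoStepInduction with
  | zero => simp [lucas]
  | one => simp [lucas]
  | more n ih₀ ih₁ =>
    simp only [lucas, Nat.fib_add_two] at *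
    omega

theorem fib_two_mul_eq_fib_mul_lucas (n : ℕ) : fib (2 * n) = fib n * lucas n := by
  have hL : lucas n = 2 * fib (n + 1) - fib n := by
    have := lucas_add_fib n
    omega
  rw [Nat.fib_two_mul, hL]

theorem lucas_dvd_fib_two_mul (n : ℕ) : lucas n ∣ fib (2 * n) :=
  fib_two_mul_eq_fib_mul_lucas n ▸ dvd_mul_left _ _

theorem gcd_fib_lucas_dvd_two (n : ℕ) : Nat.gcd (fib n) (lucas n) ∣ 2 :=
  calc Nat.gcd (fib n) (lucas n)
      = Nat.gcd (fib n) (2 * fib (n + 1)) := by rw [← lucas_add_fib, Nat.gcd_add_self_right]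
    _ = Nat.gcd (fib n) 2 := (Nat.fib_coprime_fib_succ n).symm.gcd_mul_right_cancel_right 2
    _ ∣ 2 := Nat.gcd_dvd_right _ _

theorem gcd_fib_fib_two_mul_of_odd {a : ℕ} (ha : Odd a) (b : ℕ) :
    Nat.gcd (fib a) (fib (2 * b)) = fib (Nat.gcd a b) := by
  rw [← Nat.fib_gcd, ha.coprime_two_left.gcd_mul_left_cancel_right]

theorem gcd_fib_lucas_dvd_fib_of_odd {a : ℕ} (ha : Odd a) (b : ℕ) :
    Nat.gcd (fib a) (lucas b) ∣ fib b :=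
  calc Nat.gcd (fib a) (lucas b)
      ∣ Nat.gcd (fib a) (fib (2 * b)) := Nat.gcd_dvd_gcd_of_dvd_right _ (lucas_dvd_fib_two_mul b)
    _ = fib (Nat.gcd a b) := gcd_fib_fib_two_mul_of_odd ha b
    _ ∣ fib b := Nat.fib_dvd _ _ (Nat.gcd_dvd_right a b)

theorem stmt18_general (a : ℕ) (haodd : Odd a) (hfib : Odd (Nat.fib a)) :
    ∀ b : ℕ, 1 ≤ b → Nat.gcd (Nat.fib a) (lucas b) = 1 := by
  intro b _
  have hodd : Odd (Nat.gcd (fib a) (lucas b)) := hfib.of_dvd_nat (Nat.gcd_dvd_left _ _)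
  have hdvd : Nat.gcd (fib a) (lucas b) ∣ Nat.gcd (fib b) (lucas b) :=
    Nat.dvd_gcd (gcd_fib_lucas_dvd_fib_of_odd haodd b) (Nat.gcd_dvd_right _ _)
  exact (Nat.coprime_two_right.mpr hodd).eq_one_of_dvd (hdvd.trans (gcd_fib_lucas_dvd_two b))

theorem stmt18 (a : ℕ) (ha : 1 ≤ a) (haodd : Odd a) (hfib : Odd (Nat.fib a)) :
    ∀ b : ℕ, 1 ≤ b → Nat.gcd (Nat.fib a) (lucas b) = 1 :=
  stmt18_general a haodd hfib
end

section
/- For every integer m ≥ 3, the integer 5·F_m² + 4·(−1)^{m+1} is not a perfect square; that is, there is no integer t with t² = 5·F_m² + 4·(−1)^{m+1}. -/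
/-!
With `L = F_{m-1} + F_{m+1}` (the Lucas number), Cassini's identity gives
`L² = 5 F_m² + 4 (-1)^m`, so `5 F_m² + 4 (-1)^(m+1) = L² - 8 (-1)^m`.
For `m ≥ 3` this number lies strictly between `(L - 1)²` and `L²` when `m` is even (as `L ≥ 7`),
and strictly between `L²` and `(L + 1)²` when `m` is odd (as `L ≥ 4`).
-/

open Nat (fib)

lemma Int.not_exists_sq_of_lt_of_lt {a n : ℤ} (ha : 0 ≤ a) (hl : a ^ 2 < n)
    (hr : n < (a + 1) ^ 2) : ¬∃ t : ℤ, t ^ 2 = n := by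
  rintro ⟨t, rfl⟩
  have h₁ : |a| < |t| := sq_lt_sq.mp hl
  have h₂ : |t| < a + 1 := abs_lt_of_sq_lt_sq hr (by omega)
  rw [abs_of_nonneg ha] at h₁
  omega

lemma Nat.cast_fib_add_two_mul_fib_sub_fib_add_one_sq (n : ℕ) :
    (fib (n + 2) : ℤ) * fib n - fib (n + 1) ^ 2 = (-1) ^ (n + 1) := by
  have h := Int.fib_succ_mul_fib_pred_sub_fib_sq (n + 1 : ℕ)
  rwa [show ((n + 1 : ℕ) : ℤ) + 1 = (n + 2 : ℕ) by push_cast; ring,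
    show ((n + 1 : ℕ) : ℤ) - 1 = n by push_cast; ring, Int.natAbs_natCast, Int.fib_natCast,
    Int.fib_natCast, Int.fib_natCast] at h

lemma sq_fib_add_fib_add_two (n : ℕ) :
    ((fib n : ℤ) + fib (n + 2)) ^ 2 = 5 * fib (n + 1) ^ 2 + 4 * (-1) ^ (n + 1) := by
  have hrec : (fib (n + 2) : ℤ) = fib n + fib (n + 1) := by exact_mod_cast Nat.fib_add_two
  linear_combination (fib (n + 2) - fib n + fib (n + 1) : ℤ) * hrec
    + 4 * Nat.cast_fib_add_two_mul_fib_sub_fib_add_one_sq n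

lemma fib_add_fib_add_two_le_fib_add_fib_add_two {m n : ℕ} (h : m ≤ n) :
    fib m + fib (m + 2) ≤ fib n + fib (n + 2) :=
  add_le_add (Nat.fib_mono h) (Nat.fib_mono (by omega))

theorem stmt19 (m : ℕ) (hm : 3 ≤ m) :
    ¬ ∃ t : ℤ, t ^ 2 = 5 * (Nat.fib m : ℤ) ^ 2 + 4 * (-1) ^ (m + 1) := by
  obtain ⟨n, rfl⟩ : ∃ n, m = n + 1 := ⟨m - 1, by omega⟩
  have hsq := sq_fib_add_fib_add_two n
  set L : ℤ := fib n + fib (n + 2)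
  have h4 : 4 ≤ L := by
    have := fib_add_fib_add_two_le_fib_add_fib_add_two (show 2 ≤ n by omega)
    norm_num at this
    omega
  rw [pow_succ (-1 : ℤ) (n + 1)]
  rcases Nat.even_or_odd (n + 1) with heven | hodd
  · have h7 : 7 ≤ L := by
      have : 3 ≤ n := by rcases heven with ⟨k, hk⟩; omega
      have := fib_add_fib_add_two_le_fib_add_fib_add_two this
      norm_num at this
      omega
    rw [heven.neg_one_pow] at hsq ⊢
    exact Int.not_exists_sq_of_lt_of_lt (a := L - 1) (by omega) (by nlinarith) (by nlinarith)
  · rw [hodd.neg_one_pow] at hsq ⊢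
    exact Int.not_exists_sq_of_lt_of_lt (a := L) (by omega) (by nlinarith) (by nlinarith)
end
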